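/- (One-step estimator bound, L-SVRG.) Let x ∈ ℝ^d and ỹ ∈ ℝ^d, and set ḡ = (1/n) ∑_{j=1}^n ∇f_j(ỹ) = ∇f(ỹ). Then (1/n) ∑_{i=1}^n ‖∇f_i(x) − ∇f_i(ỹ) + ḡ‖² ≤ 8L (f(x) − f(x*)) + 4L ( ∑_{i=1}^n D_{f_i}(ỹ, x*) − [ (1/n) ∑_{i=1}^n D_{f_i}(x, x*) + ((n−1)/n) ∑_{i=1}^n D_{f_i}(ỹ, x*) ] ), where the bracketed term is the expectation of ∑_{i=1}^n D_{f_i}(ỹ', x*) when the updated anchor ỹ' equals x with probability p = 1/n and equals ỹ with probability 1 − 1/n. -/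

import Mathlib

/-!
Put `a i = ∇f_i(ỹ) - ∇f_i(x*)`. Since `∑ i, ∇f_i(x*) = 0`, the average of the `a i` is `ḡ`, so
`∇f_i(x) - ∇f_i(ỹ) + ḡ = (∇f_i(x) - ∇f_i(x*)) - (a i - ḡ)`. The inequality
`‖u - v‖² ≤ 2‖u‖² + 2‖v‖²`, the variance bound `∑ ‖a i - ḡ‖² ≤ ∑ ‖a i‖²` and co-coercivity
`‖∇g(a) - ∇g(b)‖² ≤ 2L D_g(a, b)` of convex `L`-smooth functions bound the sum of squares by
`4L ∑ D_{f_i}(x, x*) + 4L ∑ D_{f_i}(ỹ, x*)`. As `F x - F x* = (1/n) ∑ D_{f_i}(x, x*)`, this is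
`n` times the right-hand side. Co-coercivity itself compares the quadratic upper bound at `a`
with the linear lower bound at `b`, both evaluated at the gradient step `a - ∇g(a)/L + ∇g(b)/L`.
-/

/-- Bregman divergence `D_g(y, x) = g(y) − g(x) − ⟨∇g(x), y − x⟩`. -/
noncomputable def bregDiv {d : ℕ} (g : EuclideanSpace ℝ (Fin d) → ℝ)
    (y x : EuclideanSpace ℝ (Fin d)) : ℝ :=
  g y - g x - @inner ℝ _ _ (gradient g x) (y - x)

open Set Finset
open scoped RealInnerProductSpace Gradient

section Smooth

variable {E : Type*} [NormedAddCommGroup E] [InnerProductSpace ℝ E] [CompleteSpace E]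
  {g : E → ℝ}

theorem hasDerivAt_comp_add_smul (hg : Differentiable ℝ g) (x v : E) (t : ℝ) :
    HasDerivAt (fun s : ℝ => g (x + s • v)) ⟪∇ g (x + t • v), v⟫ t := by
  have hline : HasDerivAt (fun s : ℝ => x + s • v) v t := by
    simpa using ((hasDerivAt_id t).smul_const v).const_add x
  simpa [Function.comp_def, inner_gradient_left] using
    (hg (x + t • v)).hasFDerivAt.comp_hasDerivAt t hline

theorem ConvexOn.add_inner_gradient_le (hc : ConvexOn ℝ univ g) (hg : Differentiable ℝ g)
    (x z : E) : g x + ⟪∇ g x, z - x⟫ ≤ g z := by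
  have hline : ConvexOn ℝ univ (fun t : ℝ => g (x + t • (z - x))) := by
    have hcomp : (fun t : ℝ => g (x + t • (z - x))) = g ∘ AffineMap.lineMap x z := by
      funext t
      simp [AffineMap.lineMap_apply, add_comm]
    simpa [hcomp] using hc.comp_affineMap (AffineMap.lineMap x z)
  have hd := hasDerivAt_comp_add_smul hg x (z - x) 0
  rw [zero_smul, add_zero] at hd
  have hslope := hline.le_slope_of_hasDerivAt (mem_univ 0) (mem_univ 1) one_pos hd
  simp only [slope_def_field, one_smul, zero_smul, add_zero, sub_zero, div_one,
    add_sub_cancel] at hslope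
  linarith

theorem le_add_inner_gradient_add_sq {L : ℝ}
    (hg : Differentiable ℝ g) (hs : ∀ a b, ‖∇ g a - ∇ g b‖ ≤ L * ‖a - b‖) (x z : E) :
    g z ≤ g x + ⟪∇ g x, z - x⟫ + L / 2 * ‖z - x‖ ^ 2 := by
  set v := z - x
  -- `φ` is antitone on `[0, 1]` because `∇ g` grows at most linearly along the segment.
  let φ : ℝ → ℝ := fun t => g (x + t • v) - t * ⟪∇ g x, v⟫ - L / 2 * t ^ 2 * ‖v‖ ^ 2
  have hφ : ∀ t, HasDerivAt φ (⟪∇ g (x + t • v), v⟫ - ⟪∇ g x, v⟫ - L * t * ‖v‖ ^ 2) t := by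
    intro t
    refine (((hasDerivAt_comp_add_smul hg x v t).sub ((hasDerivAt_id' t).mul_const _)).sub
      (((hasDerivAt_pow 2 t).const_mul (L / 2)).mul_const (‖v‖ ^ 2))).congr_deriv ?_
    push_cast
    ring
  have hanti : AntitoneOn φ (Icc 0 1) := by
    refine antitoneOn_of_hasDerivWithinAt_nonpos (convex_Icc 0 1)
      (fun t _ => (hφ t).continuousAt.continuousWithinAt) (fun t _ => (hφ t).hasDerivWithinAt) ?_
    intro t ht
    rw [interior_Icc] at ht
    rw [sub_nonpos]
    have hgrad : ‖∇ g (x + t • v) - ∇ g x‖ ≤ L * t * ‖v‖ := by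
      simpa [norm_smul, abs_of_pos ht.1, mul_assoc] using hs (x + t • v) x
    calc ⟪∇ g (x + t • v), v⟫ - ⟪∇ g x, v⟫ = ⟪∇ g (x + t • v) - ∇ g x, v⟫ :=
          (inner_sub_left _ _ _).symm
      _ ≤ ‖∇ g (x + t • v) - ∇ g x‖ * ‖v‖ := real_inner_le_norm _ _
      _ ≤ L * t * ‖v‖ * ‖v‖ := by gcongr
      _ = L * t * ‖v‖ ^ 2 := by ring
  have h01 := hanti (left_mem_Icc.2 zero_le_one) (right_mem_Icc.2 zero_le_one) zero_le_one
  simp only [φ, one_smul, zero_smul, add_zero, add_sub_cancel, v] at h01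
  linarith

theorem ConvexOn.norm_gradient_sub_sq_le {L : ℝ} (hc : ConvexOn ℝ univ g)
    (hg : Differentiable ℝ g) (hL : 0 < L) (hs : ∀ a b, ‖∇ g a - ∇ g b‖ ≤ L * ‖a - b‖)
    (a b : E) :
    ‖∇ g a - ∇ g b‖ ^ 2 ≤ 2 * L * (g a - g b - ⟪∇ g b, a - b⟫) := by
  set w := ∇ g a - ∇ g b
  set z := a - L⁻¹ • w
  have hupper := le_add_inner_gradient_add_sq hg hs a z
  have hlower := hc.add_inner_gradient_le hg b z
  have hza : z - a = -(L⁻¹ • w) := by simp [z]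
  have hzb : z - b = (a - b) - L⁻¹ • w := by simp only [z]; abel
  rw [hza, inner_neg_right, real_inner_smul_right, norm_neg, norm_smul, Real.norm_eq_abs,
    abs_of_pos (inv_pos.2 hL)] at hupper
  rw [hzb, inner_sub_right, real_inner_smul_right] at hlower
  have hw : ⟪∇ g a, w⟫ - ⟪∇ g b, w⟫ = ‖w‖ ^ 2 := by
    rw [← inner_sub_left, real_inner_self_eq_norm_sq]
  have key : L⁻¹ * ‖w‖ ^ 2 / 2 ≤ g a - g b - ⟪∇ g b, a - b⟫ := by
    have hsq : L / 2 * (L⁻¹ * ‖w‖) ^ 2 = L⁻¹ * ‖w‖ ^ 2 / 2 := by field_simp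
    have hw' : L⁻¹ * ⟪∇ g a, w⟫ - L⁻¹ * ⟪∇ g b, w⟫ = L⁻¹ * ‖w‖ ^ 2 := by rw [← mul_sub, hw]
    linarith
  calc ‖w‖ ^ 2 = 2 * L * (L⁻¹ * ‖w‖ ^ 2 / 2) := by field_simp
    _ ≤ 2 * L * (g a - g b - ⟪∇ g b, a - b⟫) := by gcongr

end Smooth

theorem sum_gradient_eq_zero_of_forall_le {E ι : Type*} [NormedAddCommGroup E]
    [InnerProductSpace ℝ E] [CompleteSpace E] [Fintype ι] {f : ι → E → ℝ}
    (hdiff : ∀ i, Differentiable ℝ (f i)) {xstar : E}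
    (hmin : ∀ z, ∑ i, f i xstar ≤ ∑ i, f i z) : ∑ i, ∇ (f i) xstar = 0 := by
  have hderiv : HasFDerivAt (fun z => ∑ i, f i z)
      (InnerProductSpace.toDual ℝ E (∑ i, ∇ (f i) xstar)) xstar := by
    rw [map_sum]
    exact HasFDerivAt.fun_sum fun i _ => (hdiff i xstar).hasGradientAt
  have hmin' : IsLocalMin (fun z => ∑ i, f i z) xstar := Filter.Eventually.of_forall hmin
  exact (InnerProductSpace.toDual ℝ E).map_eq_zero_iff.1 (hmin'.hasFDerivAt_eq_zero hderiv)

theorem sum_norm_sub_average_sq_le {E ι : Type*} [NormedAddCommGroup E]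
    [InnerProductSpace ℝ E] [Fintype ι] (a : ι → E) :
    ∑ i, ‖a i - (Fintype.card ι : ℝ)⁻¹ • ∑ j, a j‖ ^ 2 ≤ ∑ i, ‖a i‖ ^ 2 := by
  set N : ℝ := (Fintype.card ι : ℝ)
  set c := N⁻¹ • ∑ j, a j
  have hsum : ∑ j, a j = N • c := by
    rcases isEmpty_or_nonempty ι with hι | hι
    · simp [N]
    · rw [smul_smul, mul_inv_cancel₀ (by positivity), one_smul]
  have hexpand : ∑ i, ‖a i - c‖ ^ 2 = ∑ i, ‖a i‖ ^ 2 - N * ‖c‖ ^ 2 := by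
    simp only [norm_sub_sq_real, sum_add_distrib, sum_sub_distrib, ← mul_sum, ← sum_inner,
      hsum, real_inner_smul_left, real_inner_self_eq_norm_sq, sum_const, card_univ,
      nsmul_eq_mul, N]
    ring
  rw [hexpand]
  have : 0 ≤ N * ‖c‖ ^ 2 := by positivity
  linarith

section Bregman

variable {ι : Type*} [Fintype ι] {d : ℕ} {f : ι → EuclideanSpace ℝ (Fin d) → ℝ}
  {xstar : EuclideanSpace ℝ (Fin d)}

theorem sum_bregDiv_eq_sum_sub_sum (h0 : ∑ i, ∇ (f i) xstar = 0)
    (x : EuclideanSpace ℝ (Fin d)) :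
    ∑ i, bregDiv (f i) x xstar = ∑ i, f i x - ∑ i, f i xstar := by
  simp only [bregDiv, sum_sub_distrib, ← sum_inner, h0, inner_zero_left, sub_zero]

theorem sum_norm_gradient_sub_add_average_sq_le {L : ℝ} (hconv : ∀ i, ConvexOn ℝ univ (f i))
    (hdiff : ∀ i, Differentiable ℝ (f i)) (hL : 0 < L)
    (hsmooth : ∀ i a b, ‖∇ (f i) a - ∇ (f i) b‖ ≤ L * ‖a - b‖)
    (h0 : ∑ i, ∇ (f i) xstar = 0) (x y : EuclideanSpace ℝ (Fin d)) :
    ∑ i, ‖∇ (f i) x - ∇ (f i) y + (Fintype.card ι : ℝ)⁻¹ • ∑ j, ∇ (f j) y‖ ^ 2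
      ≤ 4 * L * ∑ i, bregDiv (f i) x xstar + 4 * L * ∑ i, bregDiv (f i) y xstar := by
  have hcoco : ∀ i z, ‖∇ (f i) z - ∇ (f i) xstar‖ ^ 2 ≤ 2 * L * bregDiv (f i) z xstar :=
    fun i z => (hconv i).norm_gradient_sub_sq_le (hdiff i) hL (hsmooth i) z xstar
  set u := fun i => ∇ (f i) x - ∇ (f i) xstar
  set a := fun i => ∇ (f i) y - ∇ (f i) xstar
  set c := (Fintype.card ι : ℝ)⁻¹ • ∑ j, a j
  have hsplit : ∀ i, ∇ (f i) x - ∇ (f i) y + (Fintype.card ι : ℝ)⁻¹ • ∑ j, ∇ (f j) y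
      = u i - (a i - c) := by
    intro i
    simp only [u, a, c, sum_sub_distrib, h0, sub_zero]
    abel
  calc _ ≤ ∑ i, 2 * (‖u i‖ ^ 2 + ‖a i - c‖ ^ 2) := by
        refine sum_le_sum fun i _ => ?_
        rw [hsplit]
        exact (pow_le_pow_left₀ (norm_nonneg _) (norm_sub_le _ _) 2).trans add_sq_le
    _ = 2 * ∑ i, ‖u i‖ ^ 2 + 2 * ∑ i, ‖a i - c‖ ^ 2 := by
        rw [← mul_add, ← sum_add_distrib, mul_sum]
    _ ≤ 2 * ∑ i, ‖u i‖ ^ 2 + 2 * ∑ i, ‖a i‖ ^ 2 := by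
        gcongr 2 * _ + 2 * ?_
        exact sum_norm_sub_average_sq_le a
    _ ≤ 2 * ∑ i, 2 * L * bregDiv (f i) x xstar + 2 * ∑ i, 2 * L * bregDiv (f i) y xstar := by
        gcongr with i _ i _
        exacts [hcoco i x, hcoco i y]
    _ = 4 * L * ∑ i, bregDiv (f i) x xstar + 4 * L * ∑ i, bregDiv (f i) y xstar := by
        simp only [← mul_sum]; ring

end Bregman

theorem stmt_17_general (n d : ℕ) (hn : 1 ≤ n) (L : ℝ) (hL : 0 < L)
    (f : Fin n → EuclideanSpace ℝ (Fin d) → ℝ)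
    (hconv : ∀ i, ConvexOn ℝ Set.univ (f i))
    (hdiff : ∀ i, Differentiable ℝ (f i))
    (hsmooth : ∀ i x y, ‖gradient (f i) x - gradient (f i) y‖ ≤ L * ‖x - y‖)
    (F : EuclideanSpace ℝ (Fin d) → ℝ)
    (hF : F = fun x => (n : ℝ)⁻¹ * ∑ i, f i x)
    (xstar : EuclideanSpace ℝ (Fin d)) (hmin : ∀ z, F xstar ≤ F z)
    (x : EuclideanSpace ℝ (Fin d)) (ytil : EuclideanSpace ℝ (Fin d))
    (gbar : EuclideanSpace ℝ (Fin d))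
    (hgbar : gbar = (n : ℝ)⁻¹ • ∑ j, gradient (f j) ytil) :
    (n : ℝ)⁻¹ * ∑ i, ‖gradient (f i) x - gradient (f i) ytil + gbar‖ ^ 2
      ≤ 8 * L * (F x - F xstar)
        + 4 * L * (∑ i, bregDiv (f i) ytil xstar
            - ((n : ℝ)⁻¹ * ∑ i, bregDiv (f i) x xstar
                + (((n : ℝ) - 1) / n) * ∑ i, bregDiv (f i) ytil xstar)) := by
  have hn0 : (0 : ℝ) < n := by exact_mod_cast hn
  subst hF hgbar
  have h0 : ∑ i, ∇ (f i) xstar = 0 := sum_gradient_eq_zero_of_forall_le hdiff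
    fun z => le_of_mul_le_mul_left (hmin z) (inv_pos.2 hn0)
  have hbound := sum_norm_gradient_sub_add_average_sq_le hconv hdiff hL hsmooth h0 x ytil
  rw [Fintype.card_fin] at hbound
  have hgap : (n : ℝ)⁻¹ * ∑ i, f i x - (n : ℝ)⁻¹ * ∑ i, f i xstar
      = (n : ℝ)⁻¹ * ∑ i, bregDiv (f i) x xstar := by
    rw [sum_bregDiv_eq_sum_sub_sum h0, mul_sub]
  have hrhs : 8 * L * ((n : ℝ)⁻¹ * ∑ i, bregDiv (f i) x xstar)
        + 4 * L * (∑ i, bregDiv (f i) ytil xstar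
          - ((n : ℝ)⁻¹ * ∑ i, bregDiv (f i) x xstar
            + (((n : ℝ) - 1) / n) * ∑ i, bregDiv (f i) ytil xstar))
      = (n : ℝ)⁻¹
          * (4 * L * ∑ i, bregDiv (f i) x xstar + 4 * L * ∑ i, bregDiv (f i) ytil xstar) := by
    field_simp
    ring
  simp only [hgap, hrhs]
  gcongr

theorem stmt_17 (n d : ℕ) (hn : 1 ≤ n) (hd : 1 ≤ d) (L : ℝ) (hL : 0 < L)
    (f : Fin n → EuclideanSpace ℝ (Fin d) → ℝ)
    (hconv : ∀ i, ConvexOn ℝ Set.univ (f i))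
    (hdiff : ∀ i, Differentiable ℝ (f i))
    (hsmooth : ∀ i x y, ‖gradient (f i) x - gradient (f i) y‖ ≤ L * ‖x - y‖)
    (F : EuclideanSpace ℝ (Fin d) → ℝ)
    (hF : F = fun x => (n : ℝ)⁻¹ * ∑ i, f i x)
    (xstar : EuclideanSpace ℝ (Fin d)) (hmin : ∀ z, F xstar ≤ F z)
    (x : EuclideanSpace ℝ (Fin d)) (ytil : EuclideanSpace ℝ (Fin d))
    (gbar : EuclideanSpace ℝ (Fin d))
    (hgbar : gbar = (n : ℝ)⁻¹ • ∑ j, gradient (f j) ytil) :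
    (n : ℝ)⁻¹ * ∑ i, ‖gradient (f i) x - gradient (f i) ytil + gbar‖ ^ 2
      ≤ 8 * L * (F x - F xstar)
        + 4 * L * (∑ i, bregDiv (f i) ytil xstar
            - ((n : ℝ)⁻¹ * ∑ i, bregDiv (f i) x xstar
                + (((n : ℝ) - 1) / n) * ∑ i, bregDiv (f i) ytil xstar)) :=
  stmt_17_general n d hn L hL f hconv hdiff hsmooth F hF xstar hmin x ytil gbar hgbar
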